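/- arXiv:2108.02655 — 5 statements merged into one kernel-verified Lean document; each statement's English description precedes it below -/
import Mathlib

section
/- Every finite simple graph G on n ≥ 1 vertices admits a high-degree sinkless orientation: there exists an orientation of the edges of G such that every vertex of degree at least ⌊log₂ n⌋ + 1 has at least one outgoing edge. -/
/-!
A vertex of degree at least `⌊log₂ n⌋ + 1 ≥ 1` forces `n ≥ 2`, so it has degree at least two.
If every vertex of a set `S` has degree at least two, Hall's theorem gives each vertex of `S` its
own incident edge: double counting incidences shows that any `k` vertices of `S` touch at least
`k` edges (each vertex lies on at least two of them, each edge contains at most two of the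
vertices). Orienting each chosen edge away from its owner, and the other edges arbitrarily,
gives every vertex of `S` an outgoing edge.
-/

open Finset Function

theorem Finset.card_le_card_biUnion_of_le_card {ι α : Type*} [DecidableEq α] {t : ι → Finset α}
    {d : ℕ} (hd : 0 < d) (ht : ∀ i, d ≤ #(t i))
    (hmult : ∀ (s : Finset ι) (a : α), #{i ∈ s | a ∈ t i} ≤ d) (s : Finset ι) :
    #s ≤ #(s.biUnion t) := by
  classical
  have hcount : #s * d ≤ #(s.biUnion t) * d := by
    refine card_mul_le_card_mul (fun i a => a ∈ t i) (fun i hi => ?_) (fun a _ => hmult s a)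
    calc d ≤ #(t i) := ht i
      _ = #((s.biUnion t).bipartiteAbove (fun i a => a ∈ t i) i) := by
        rw [bipartiteAbove, filter_mem_eq_inter, inter_eq_right.mpr (subset_biUnion_of_mem t hi)]
  exact Nat.le_of_mul_le_mul_right hcount hd

theorem Sym2.exists_head_ne_of_injective {ι α : Type*} {f : ι → Sym2 α} (hf : Injective f)
    {g : ι → α} (hg : ∀ i, g i ∈ f i) (hdiag : ∀ i, ¬(f i).IsDiag) :
    ∃ head : Sym2 α → α, (∀ e, head e ∈ e) ∧ ∀ i, head (f i) ≠ g i := by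
  refine ⟨extend f (fun i => Mem.other (hg i)) (fun e => e.out.1), fun e => ?_, fun i => ?_⟩
  · by_cases he : ∃ i, f i = e
    · obtain ⟨i, rfl⟩ := he
      rw [hf.extend_apply]
      exact other_mem _
    · rw [extend_apply' _ _ _ he]
      exact out_fst_mem e
  · rw [hf.extend_apply]
    exact other_ne (hdiag i) (hg i)

namespace SimpleGraph

variable {V : Type*} [Fintype V] (G : SimpleGraph V) [DecidableRel G.Adj]

theorem two_le_degree_of_log_lt_degree {v : V}
    (hv : Nat.log 2 (Fintype.card V) + 1 ≤ G.degree v) :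
    2 ≤ G.degree v := by
  have hcard : 2 ≤ Fintype.card V := by
    have := G.degree_lt_card_verts v
    omega
  have := Nat.log_pos (b := 2) one_lt_two hcard
  omega

theorem exists_injective_incidence_of_two_le_degree [DecidableEq V] (P : V → Prop)
    (hP : ∀ v, P v → 2 ≤ G.degree v) :
    ∃ f : {v // P v} → Sym2 V, Injective f ∧ ∀ v : {v // P v}, f v ∈ G.incidenceFinset v := by
  refine (all_card_le_biUnion_card_iff_exists_injective _).mp
    (card_le_card_biUnion_of_le_card two_pos (fun v => ?_) fun s e => ?_)
  · rw [card_incidenceFinset_eq_degree]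
    exact hP v v.2
  · calc #{v ∈ s | e ∈ G.incidenceFinset v.1} ≤ #e.toFinset := by
          refine card_le_card_of_injOn Subtype.val (fun v hv => ?_) Subtype.val_injective.injOn
          rw [mem_coe, mem_filter, mem_incidenceFinset] at hv
          simpa using hv.2.2
      _ ≤ 2 := by
          rw [Sym2.card_toFinset]
          split_ifs <;> omega

theorem exists_orientation_forall_exists_out_of_two_le_degree (P : V → Prop)
    (hP : ∀ v, P v → 2 ≤ G.degree v) :
    ∃ head : Sym2 V → V, (∀ e, head e ∈ e) ∧
      ∀ v, P v → ∃ e ∈ G.edgeSet, v ∈ e ∧ head e ≠ v := by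
  classical
  obtain ⟨f, hf, hfG⟩ := G.exists_injective_incidence_of_two_le_degree P hP
  have hfEdge : ∀ v, f v ∈ G.edgeSet ∧ v.1 ∈ f v := fun v => (G.mem_incidenceFinset _ _).mp (hfG v)
  obtain ⟨head, hhead, hne⟩ := Sym2.exists_head_ne_of_injective hf (fun v => (hfEdge v).2)
    fun v => G.not_isDiag_of_mem_edgeSet (hfEdge v).1
  exact ⟨head, hhead, fun v hv => ⟨f ⟨v, hv⟩, (hfEdge _).1, (hfEdge _).2, hne _⟩⟩

end SimpleGraph

theorem high_degree_sinkless_orientation_exists_general {V : Type} [Fintype V]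
    (G : SimpleGraph V) [DecidableRel G.Adj] :
    ∃ head : Sym2 V → V,
      (∀ e ∈ G.edgeSet, head e ∈ e) ∧
      (∀ v : V, Nat.log 2 (Fintype.card V) + 1 ≤ G.degree v →
        ∃ e ∈ G.edgeSet, v ∈ e ∧ head e ≠ v) := by
  obtain ⟨head, hhead, hout⟩ := G.exists_orientation_forall_exists_out_of_two_le_degree _
    fun _ => G.two_le_degree_of_log_lt_degree
  exact ⟨head, fun e _ => hhead e, hout⟩

/-- **High-degree sinkless orientation exists.** Every finite simple graph on
`n ≥ 1` vertices admits an orientation of its edges such that every vertex of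
degree at least `⌊log₂ n⌋ + 1` has at least one outgoing edge. Here
`Nat.log 2 n` is the floor of the base-2 logarithm of `n`. -/
theorem high_degree_sinkless_orientation_exists {V : Type} [Fintype V] [DecidableEq V]
    (G : SimpleGraph V) [DecidableRel G.Adj] (hn : 1 ≤ Fintype.card V) :
    ∃ head : Sym2 V → V,
      (∀ e ∈ G.edgeSet, head e ∈ e) ∧
      (∀ v : V, Nat.log 2 (Fintype.card V) + 1 ≤ G.degree v →
        ∃ e ∈ G.edgeSet, v ∈ e ∧ head e ≠ v) :=
  high_degree_sinkless_orientation_exists_general G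
end

section
/- Let G be a finite simple graph, v a vertex of G, and T ≥ 1 a natural number. Suppose that every vertex u reachable from v with dist_G(v,u) ≤ T − 1 has degree at least 3 in G, and that the subgraph of G induced on the set {u : u reachable from v, dist_G(v,u) ≤ T} contains no cycle. Then the number of vertices u reachable from v with dist_G(v,u) = T is at least 3 · 2^(T−1). -/
/-!
Since the ball `B` of radius `T` around `v` induces a forest, a vertex `u ∈ B` has at most one
neighbour `w` with `dist v w ≤ dist v u`: a geodesic from `v` to `w` followed by the edge `wu` is a
path from `v` to `u` inside `B`, and paths in a forest are unique. So a vertex on level `k < T`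
(the vertices at distance `k` from `v`) of degree at least `d` has at least `d - 1` neighbours on
level `k + 1`, and a vertex on level `k + 1` has at most one neighbour on level `k`; double counting
the edges between consecutive levels gives `#level (k + 1) ≥ (d - 1) * #level k`.
-/

open Finset

namespace SimpleGraph

variable {V : Type*} {G : SimpleGraph V}

theorem Walk.dist_add_dist_le_length {u w x : V} (p : G.Walk u w) (hx : x ∈ p.support) :
    G.dist u x + G.dist x w ≤ p.length := by
  classical
  calc G.dist u x + G.dist x w ≤ (p.takeUntil x hx).length + (p.dropUntil x hx).length :=
        add_le_add (G.dist_le _) (G.dist_le _)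
    _ = p.length := by rw [← Walk.length_append, p.take_spec hx]

theorem IsAcyclic.eq_of_isPath_of_support_subset {s : Set V} (h : (G.induce s).IsAcyclic)
    {u w : V} {p q : G.Walk u w} (hp : p.IsPath) (hq : q.IsPath)
    (hps : ∀ x ∈ p.support, x ∈ s) (hqs : ∀ x ∈ q.support, x ∈ s) : p = q := by
  have hp' : (p.induce s hps).IsPath := .of_map (f := (Embedding.induce s).toHom) <| by
    rwa [Walk.map_induce]
  have hq' : (q.induce s hqs).IsPath := .of_map (f := (Embedding.induce s).toHom) <| by
    rwa [Walk.map_induce]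
  simpa using congrArg (fun r => r.1.map (Embedding.induce s).toHom)
    ((h.subsingleton_path _ _).elim ⟨_, hp'⟩ ⟨_, hq'⟩)

theorem exists_isPath_concat_of_dist_le {v u w : V} (hu : G.Reachable v u) (h : G.Adj w u)
    (hd : G.dist v w ≤ G.dist v u) :
    ∃ q : G.Walk v w, (q.concat h).IsPath ∧
      ∀ x ∈ (q.concat h).support, G.Reachable v x ∧ G.dist v x ≤ G.dist v u := by
  obtain ⟨q, hq, hql⟩ := (hu.trans h.symm.reachable).exists_path_of_dist
  have hdist : ∀ x ∈ q.support, G.dist v x + G.dist x w ≤ G.dist v w :=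
    fun x hx => hql ▸ q.dist_add_dist_le_length hx
  have hnu : u ∉ q.support := fun hmem => by
    have := hdist u hmem
    rw [dist_eq_one_iff_adj.mpr h.symm] at this
    omega
  refine ⟨q, hq.concat hnu h, fun x hx => ?_⟩
  rw [Walk.support_concat, List.mem_append, List.mem_singleton] at hx
  rcases hx with hx | rfl
  · classical
    exact ⟨⟨q.takeUntil x hx⟩, by have := hdist x hx; omega⟩
  · exact ⟨hu, le_rfl⟩

theorem eq_of_adj_of_dist_le_of_isAcyclic_ball {v : V} {T : ℕ}
    (hacyc : (G.induce {u | G.Reachable v u ∧ G.dist v u ≤ T}).IsAcyclic)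
    {u w₁ w₂ : V} (hu : G.Reachable v u) (huT : G.dist v u ≤ T)
    (h₁ : G.Adj w₁ u) (h₂ : G.Adj w₂ u)
    (hd₁ : G.dist v w₁ ≤ G.dist v u) (hd₂ : G.dist v w₂ ≤ G.dist v u) : w₁ = w₂ := by
  obtain ⟨q₁, hq₁, hs₁⟩ := exists_isPath_concat_of_dist_le hu h₁ hd₁
  obtain ⟨q₂, hq₂, hs₂⟩ := exists_isPath_concat_of_dist_le hu h₂ hd₂
  have hball {q : G.Walk v u} (hs : ∀ x ∈ q.support, G.Reachable v x ∧ G.dist v x ≤ G.dist v u) :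
      ∀ x ∈ q.support, G.Reachable v x ∧ G.dist v x ≤ T :=
    fun x hx => ⟨(hs x hx).1, (hs x hx).2.trans huT⟩
  obtain ⟨hw, -⟩ := Walk.concat_inj <|
    hacyc.eq_of_isPath_of_support_subset hq₁ hq₂ (hball hs₁) (hball hs₂)
  exact hw

section Levels

variable [Fintype V]

open Classical in
noncomputable def levelFinset (G : SimpleGraph V) (v : V) (k : ℕ) : Finset V :=
  {u | G.Reachable v u ∧ G.dist v u = k}

@[simp]
theorem mem_levelFinset {v u : V} {k : ℕ} :
    u ∈ G.levelFinset v k ↔ G.Reachable v u ∧ G.dist v u = k := by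
  simp [levelFinset]

variable [DecidableRel G.Adj]

theorem degree_le_card_levelFinset_one (v : V) : G.degree v ≤ #(G.levelFinset v 1) := by
  rw [← card_neighborFinset_eq_degree]
  refine card_le_card fun w hw => ?_
  rw [mem_neighborFinset] at hw
  exact mem_levelFinset.mpr ⟨hw.reachable, dist_eq_one_iff_adj.mpr hw⟩

variable {v : V} {T : ℕ}

theorem card_adj_levelFinset_le_one
    (hacyc : (G.induce {u | G.Reachable v u ∧ G.dist v u ≤ T}).IsAcyclic)
    {k : ℕ} (hk : k + 1 ≤ T) {w : V} (hw : w ∈ G.levelFinset v (k + 1)) :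
    #{u ∈ G.levelFinset v k | G.Adj u w} ≤ 1 := by
  rw [mem_levelFinset] at hw
  refine card_le_one.mpr fun u₁ hu₁ u₂ hu₂ => ?_
  simp only [mem_filter, mem_levelFinset] at hu₁ hu₂
  exact eq_of_adj_of_dist_le_of_isAcyclic_ball hacyc hw.1 (by omega) hu₁.2 hu₂.2
    (by omega) (by omega)

theorem degree_sub_one_le_card_adj_levelFinset
    (hacyc : (G.induce {u | G.Reachable v u ∧ G.dist v u ≤ T}).IsAcyclic)
    {k : ℕ} (hk : k ≤ T) {u : V} (hu : u ∈ G.levelFinset v k) :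
    G.degree u - 1 ≤ #{w ∈ G.levelFinset v (k + 1) | G.Adj u w} := by
  rw [mem_levelFinset] at hu
  have hlower : #{w ∈ G.neighborFinset u | G.dist v w ≤ k} ≤ 1 := by
    refine card_le_one.mpr fun w₁ hw₁ w₂ hw₂ => ?_
    simp only [mem_filter, mem_neighborFinset] at hw₁ hw₂
    exact eq_of_adj_of_dist_le_of_isAcyclic_ball hacyc hu.1 (by omega) hw₁.1.symm hw₂.1.symm
      (by omega) (by omega)
  have hupper : {w ∈ G.neighborFinset u | ¬G.dist v w ≤ k} ⊆
      {w ∈ G.levelFinset v (k + 1) | G.Adj u w} := by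
    intro w hw
    simp only [mem_filter, mem_neighborFinset, mem_levelFinset] at hw ⊢
    have hstep := hw.1.diff_dist_adj (u := v)
    exact ⟨⟨hu.1.trans hw.1.reachable, by omega⟩, hw.1⟩
  have hsplit := card_filter_add_card_filter_not (s := G.neighborFinset u) (G.dist v · ≤ k)
  rw [card_neighborFinset_eq_degree] at hsplit
  have := card_le_card hupper
  omega

theorem mul_card_levelFinset_le
    (hacyc : (G.induce {u | G.Reachable v u ∧ G.dist v u ≤ T}).IsAcyclic)
    {d k : ℕ} (hk : k + 1 ≤ T) (hdeg : ∀ u ∈ G.levelFinset v k, d ≤ G.degree u) :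
    (d - 1) * #(G.levelFinset v k) ≤ #(G.levelFinset v (k + 1)) := by
  rw [mul_comm, ← mul_one #(G.levelFinset v (k + 1))]
  refine card_mul_le_card_mul G.Adj (fun u hu => ?_) (fun w hw => ?_)
  · exact (Nat.sub_le_sub_right (hdeg u hu) 1).trans
      (degree_sub_one_le_card_adj_levelFinset hacyc (by omega) hu)
  · exact card_adj_levelFinset_le_one hacyc hk hw

theorem mul_pow_le_card_levelFinset_succ
    (hacyc : (G.induce {u | G.Reachable v u ∧ G.dist v u ≤ T}).IsAcyclic) {d : ℕ}
    (hdeg : ∀ u, G.Reachable v u → G.dist v u ≤ T - 1 → d ≤ G.degree u) :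
    ∀ k, k + 1 ≤ T → d * (d - 1) ^ k ≤ #(G.levelFinset v (k + 1))
  | 0, _ => by
    simpa using (hdeg v .rfl (by simp)).trans (G.degree_le_card_levelFinset_one v)
  | k + 1, hkT =>
    calc d * (d - 1) ^ (k + 1) = (d - 1) * (d * (d - 1) ^ k) := by ring
      _ ≤ (d - 1) * #(G.levelFinset v (k + 1)) :=
          Nat.mul_le_mul_left _ (mul_pow_le_card_levelFinset_succ hacyc hdeg k (by omega))
      _ ≤ #(G.levelFinset v (k + 2)) := mul_card_levelFinset_le hacyc hkT fun u hu =>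
          hdeg u (mem_levelFinset.mp hu).1 (by rw [(mem_levelFinset.mp hu).2]; omega)

end Levels

end SimpleGraph

theorem sphere_large_of_locally_tree_like_general {V : Type} [Fintype V]
    (G : SimpleGraph V) [DecidableRel G.Adj] (v : V) (T : ℕ) (hT : 1 ≤ T)
    (hdeg : ∀ u : V, G.Reachable v u → G.dist v u ≤ T - 1 → 3 ≤ G.degree u)
    (hacyc : (G.induce {u : V | G.Reachable v u ∧ G.dist v u ≤ T}).IsAcyclic) :
    3 * 2 ^ (T - 1) ≤ {u : V | G.Reachable v u ∧ G.dist v u = T}.ncard := by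
  have hlevel : {u : V | G.Reachable v u ∧ G.dist v u = T} = G.levelFinset v T := by
    ext; simp
  obtain ⟨k, rfl⟩ : ∃ k, T = k + 1 := ⟨T - 1, by omega⟩
  rw [hlevel, Set.ncard_coe_finset]
  exact SimpleGraph.mul_pow_le_card_levelFinset_succ hacyc hdeg k le_rfl

/-- Let `G` be a finite simple graph, `v` a vertex and `T ≥ 1`. If every vertex
`u` reachable from `v` with `dist v u ≤ T - 1` has degree at least 3, and the
subgraph induced on `{u | reachable from v, dist v u ≤ T}` contains no cycle,
then there are at least `3 * 2 ^ (T - 1)` vertices `u` reachable from `v` with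
`dist v u = T`. -/
theorem sphere_large_of_locally_tree_like {V : Type} [Fintype V] [DecidableEq V]
    (G : SimpleGraph V) [DecidableRel G.Adj] (v : V) (T : ℕ) (hT : 1 ≤ T)
    (hdeg : ∀ u : V, G.Reachable v u → G.dist v u ≤ T - 1 → 3 ≤ G.degree u)
    (hacyc : (G.induce {u : V | G.Reachable v u ∧ G.dist v u ≤ T}).IsAcyclic) :
    3 * 2 ^ (T - 1) ≤ {u : V | G.Reachable v u ∧ G.dist v u = T}.ncard :=
  sphere_large_of_locally_tree_like_general G v T hT hdeg hacyc
end

section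
/- Let G be a finite connected simple graph on n ≥ 2 vertices, let T = ⌈log₂(⌊log₂ n⌋ + 1)⌉, let v be a vertex of G, and let C be a set of vertices of G containing every vertex u with dist_G(v,u) ≤ T. If the number of edges of G with exactly one endpoint in C is less than ⌊log₂ n⌋ + 1, then the subgraph of G induced on C contains a cycle, or some vertex of C has degree at most 2 in G. -/
/-!
Suppose `G[C]` is a forest and every vertex of `C` has degree at least 3 in `G`. For a vertex set
`s`, let `e(s)` count the edges inside `s` and `∂s` those leaving it. Summing degrees over `s`
gives `3|s| ≤ 2 e(s) + ∂s`; in a forest also `e(s) < |s|` and `e(s) + ∂s < |V|`, so a forest in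
which `k ≥ 1` vertices have degree at least 3 has at least `2k + 2` vertices. Applied to the
forest `G[B(v, t + 1)]`, which contains every neighbour of the ball `B(v, t)`, this doubles the
balls around `v`, so `|C| ≥ |B(v, T)| ≥ 2^T ≥ ⌊log₂ n⌋ + 1`. Applied to `C` itself, the same count
gives `∂C ≥ |C| + 2`, contradicting the bound on `∂C`.
-/open Finset

namespace SimpleGraph

variable {V : Type*} {G : SimpleGraph V}

theorem edgeSet_between_compl (s : Set V) :
    (G.between s sᶜ).edgeSet = {e ∈ G.edgeSet | ∃ u w, e = s(u, w) ∧ u ∈ s ∧ w ∉ s} := by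
  ext e
  induction e using Sym2.ind with | _ x y => ?_
  simp only [mem_edgeSet, between_adj, Set.mem_compl_iff, Set.mem_ofPred_eq, Sym2.eq_iff]
  grind [G.adj_comm]

theorem IsAcyclic.card_edgeFinset_lt_card [Fintype V] [Nonempty V] [DecidableRel G.Adj]
    (hG : G.IsAcyclic) : #G.edgeFinset < Fintype.card V := by
  classical
  obtain ⟨F, hGF, -, hF⟩ := connected_top.exists_isTree_le_of_le_of_isAcyclic le_top hG
  rw [← hF.card_edgeFinset]
  have := card_le_card (edgeFinset_mono hGF)
  omega

theorem card_edgeFinset_induce_lt_card [DecidableRel G.Adj] {s : Finset V}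
    (h : (G.induce s).IsAcyclic) (hs : s.Nonempty) : #(G.induce s).edgeFinset < #s := by
  have : Nonempty (s : Set V) := hs.coe_sort
  simpa using h.card_edgeFinset_lt_card

section Finite

variable [Fintype V] [DecidableEq V] [DecidableRel G.Adj]

theorem degree_eq_degree_induce_add_degree_between {s : Finset V} (v : (s : Set V)) :
    G.degree v = (G.induce s).degree v + (G.between s (↑s)ᶜ).degree v := by
  have hinduce := congrArg card (map_neighborFinset_induce (G := G) v)
  have hbetween : (G.between s (↑s)ᶜ).neighborFinset v = G.neighborFinset v \ s := by
    ext w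
    simp [between_adj, v.2]
  rw [card_map, Finset.toFinset_coe] at hinduce
  rw [← card_neighborFinset_eq_degree, ← card_neighborFinset_eq_degree,
    ← card_neighborFinset_eq_degree, hbetween, ← card_inter_add_card_sdiff _ s, ← hinduce]
  congr!

theorem sum_degree_eq_two_mul_card_edgeFinset_induce_add (s : Finset V) :
    ∑ v ∈ s, G.degree v =
      2 * #(G.induce s).edgeFinset + #(G.between s (↑s)ᶜ).edgeFinset := by
  have hbip : (G.between s (↑s)ᶜ).IsBipartiteWith s ↑sᶜ := by
    simpa using between_isBipartiteWith disjoint_compl_right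
  rw [← sum_finset_coe, Fintype.sum_congr _ _ degree_eq_degree_induce_add_degree_between,
    sum_add_distrib, sum_degrees_eq_twice_card_edges,
    sum_finset_coe fun v => (G.between s (↑s)ᶜ).degree v,
    isBipartiteWith_sum_degrees_eq_card_edges hbip]

theorem card_edgeFinset_induce_add_card_edgeFinset_between_le (s : Finset V) :
    #(G.induce s).edgeFinset + #(G.between s (↑s)ᶜ).edgeFinset ≤ #G.edgeFinset := by
  have hinduce := congrArg card (map_edgeFinset_induce (G := G) (s := (s : Set V)))
  rw [card_map, Finset.toFinset_coe] at hinduce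
  rw [← card_inter_add_card_sdiff G.edgeFinset s.sym2, ← hinduce]
  gcongr
  intro e he
  induction e using Sym2.ind
  simp only [mem_edgeFinset, mem_edgeSet, between_adj, mem_sdiff, mem_sym2_iff, Sym2.mem_iff,
    Set.mem_compl_iff, mem_coe] at he ⊢
  grind

theorem card_add_two_le_card_edgeFinset_between {s : Finset V} (h : (G.induce s).IsAcyclic)
    (hs : s.Nonempty) (hdeg : ∀ v ∈ s, 3 ≤ G.degree v) :
    #s + 2 ≤ #(G.between s (↑s)ᶜ).edgeFinset := by
  have hsum := sum_degree_eq_two_mul_card_edgeFinset_induce_add (G := G) s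
  have h3 : #s * 3 ≤ ∑ v ∈ s, G.degree v := by simpa using card_nsmul_le_sum s _ 3 hdeg
  have := card_edgeFinset_induce_lt_card h hs
  omega

theorem IsAcyclic.two_mul_card_add_two_le_card (hG : G.IsAcyclic) {s : Finset V}
    (hs : s.Nonempty) (hdeg : ∀ v ∈ s, 3 ≤ G.degree v) : 2 * #s + 2 ≤ Fintype.card V := by
  have : Nonempty V := hs.to_type
  have hsum := sum_degree_eq_two_mul_card_edgeFinset_induce_add (G := G) s
  have h3 : #s * 3 ≤ ∑ v ∈ s, G.degree v := by simpa using card_nsmul_le_sum s _ 3 hdeg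
  have := card_edgeFinset_induce_lt_card (hG.induce s) hs
  have := card_edgeFinset_induce_add_card_edgeFinset_between_le (G := G) s
  have := hG.card_edgeFinset_lt_card
  omega

theorem two_mul_card_add_two_le_card_of_neighborSet_subset {s t : Finset V} (hst : s ⊆ t)
    (hN : ∀ v ∈ s, G.neighborSet v ⊆ t) (h : (G.induce t).IsAcyclic) (hs : s.Nonempty)
    (hdeg : ∀ v ∈ s, 3 ≤ G.degree v) : 2 * #s + 2 ≤ #t := by
  obtain ⟨x, hx⟩ := hs
  have key := h.two_mul_card_add_two_le_card (s := s.subtype (· ∈ (t : Set V)))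
    ⟨⟨x, hst hx⟩, mem_subtype.mpr hx⟩ fun v hv => by
      rw [mem_subtype] at hv
      convert hdeg v hv using 1
      convert degree_induce_of_neighborSet_subset (hN v hv)
  simpa [card_subtype, filter_true_of_mem hst] using key

theorem two_pow_le_card_of_dist_le_imp_mem {C : Finset V} {v : V} {T : ℕ}
    (hC : ∀ u, G.dist v u ≤ T → u ∈ C) (h : (G.induce C).IsAcyclic)
    (hdeg : ∀ u ∈ C, 3 ≤ G.degree u) : 2 ^ T ≤ #C := by
  suffices hball : ∀ t ≤ T, 2 ^ t ≤ #{u | G.dist v u ≤ t} from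
    (hball T le_rfl).trans (card_le_card fun u hu => hC u (mem_filter.mp hu).2)
  intro t ht
  induction t with
  | zero => exact card_pos.mpr ⟨v, by simp⟩
  | succ t ih =>
    have hmono : ({u | G.dist v u ≤ t} : Finset V) ⊆ ({u | G.dist v u ≤ t + 1} : Finset V) :=
      fun u hu => mem_filter.mpr ⟨mem_univ u, (mem_filter.mp hu).2.trans t.le_succ⟩
    have hsub : ({u | G.dist v u ≤ t + 1} : Finset V) ⊆ C := fun u hu =>
      hC u ((mem_filter.mp hu).2.trans ht)
    have hneighbor : ∀ u ∈ ({u | G.dist v u ≤ t} : Finset V),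
        G.neighborSet u ⊆ ({u | G.dist v u ≤ t + 1} : Finset V) := fun u hu w huw => by
      have := (mem_filter.mp hu).2
      have := huw.diff_dist_adj (u := v)
      simp only [mem_coe, mem_filter, mem_univ, true_and]
      omega
    have hgrow := two_mul_card_add_two_le_card_of_neighborSet_subset hmono hneighbor
      (h.embedding (G.induceHomOfLE (coe_subset.mpr hsub))) ⟨v, by simp⟩
      (fun u hu => hdeg u (hsub (hmono hu)))
    have := ih (by omega)
    rw [pow_succ]
    omega

end Finite

end SimpleGraph

theorem low_degree_cluster_has_cycle_or_low_degree_vertex_general {V : Type} [Fintype V]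
    (G : SimpleGraph V) [DecidableRel G.Adj]
    (T : ℕ) (hT : T = Nat.clog 2 (Nat.log 2 (Fintype.card V) + 1))
    (v : V) (C : Set V) (hC : ∀ u : V, G.dist v u ≤ T → u ∈ C)
    (hbound : {e ∈ G.edgeSet | ∃ u w : V, e = s(u, w) ∧ u ∈ C ∧ w ∉ C}.ncard
        < Nat.log 2 (Fintype.card V) + 1) :
    ¬ (G.induce C).IsAcyclic ∨ ∃ u ∈ C, G.degree u ≤ 2 := by
  classical
  obtain ⟨A, rfl⟩ : ∃ A : Finset V, ↑A = C := ⟨C.toFinset, C.coe_toFinset⟩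
  rw [or_iff_not_imp_left, not_not]
  intro hacyc
  by_contra! hdeg
  have hA : A.Nonempty := ⟨v, hC v (by simp)⟩
  have hlog : Nat.log 2 (Fintype.card V) + 1 ≤ 2 ^ T := hT ▸ Nat.le_pow_clog one_lt_two _
  have hcard : 2 ^ T ≤ #A := SimpleGraph.two_pow_le_card_of_dist_le_imp_mem hC hacyc hdeg
  have hboundary := SimpleGraph.card_add_two_le_card_edgeFinset_between hacyc hA hdeg
  rw [← SimpleGraph.edgeSet_between_compl, ← SimpleGraph.coe_edgeFinset, Set.ncard_coe_finset]
    at hbound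
  omega

/-- Let `G` be a finite connected simple graph on `n ≥ 2` vertices, let
`T = ⌈log₂(⌊log₂ n⌋ + 1)⌉` (here `Nat.log` is floor-log and `Nat.clog` is
ceiling-log), let `v` be a vertex, and let `C` be a set of vertices containing
every vertex `u` with `dist v u ≤ T`. If the number of edges of `G` with
exactly one endpoint in `C` is less than `⌊log₂ n⌋ + 1`, then the subgraph
induced on `C` contains a cycle, or some vertex of `C` has degree at most 2. -/
theorem low_degree_cluster_has_cycle_or_low_degree_vertex {V : Type} [Fintype V] [DecidableEq V]
    (G : SimpleGraph V) [DecidableRel G.Adj] (hG : G.Connected)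
    (hn : 2 ≤ Fintype.card V)
    (T : ℕ) (hT : T = Nat.clog 2 (Nat.log 2 (Fintype.card V) + 1))
    (v : V) (C : Set V) (hC : ∀ u : V, G.dist v u ≤ T → u ∈ C)
    (hbound : {e ∈ G.edgeSet | ∃ u w : V, e = s(u, w) ∧ u ∈ C ∧ w ∉ C}.ncard
        < Nat.log 2 (Fintype.card V) + 1) :
    ¬ (G.induce C).IsAcyclic ∨ ∃ u ∈ C, G.degree u ≤ 2 :=
  low_degree_cluster_has_cycle_or_low_degree_vertex_general G T hT v C hC hbound
end

section
/- Let G be a finite simple graph and let H be its bipartite double cover: the simple graph on vertex set V(G) × Bool in which (u,b) is adjacent to (v,c) if and only if u is adjacent to v in G and b ≠ c. Then the girth of H is at least the girth of G (as extended natural numbers, with girth ∞ when the graph is acyclic). -/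
/-!
The projection of the double cover onto `G` is injective on every neighbourhood, so it maps a
cycle to a closed walk that never steps straight back; following such a walk up to its first
repeated vertex closes a cycle of `G` that is no longer. Conversely, if `uv` lies on a cycle of
`G`, lifting the rest of that cycle once or twice joins `(u, false)` to `(v, true)` without the
edge between them, so the cover is acyclic only if `G` is; this matters because the girth of an
acyclic graph is `0`.
-/

/-- The bipartite double cover of a simple graph `G`: the graph on `V × Bool`
where `(u, b)` is adjacent to `(v, c)` iff `u` is adjacent to `v` in `G` and
`b ≠ c`. -/
def bipartiteDoubleCover {V : Type} (G : SimpleGraph V) : SimpleGraph (V × Bool) where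
  Adj x y := G.Adj x.1 y.1 ∧ x.2 ≠ y.2
  symm := ⟨fun _ _ ⟨h, hb⟩ => ⟨h.symm, hb.symm⟩⟩
  loopless := ⟨fun _ ⟨_, hb⟩ => hb rfl⟩

namespace SimpleGraph

variable {V W : Type*} {G : SimpleGraph V} {H : SimpleGraph W}

theorem Walk.exists_isCycle_length_le_of_not_nodup [DecidableEq V] {u v : V} (p : G.Walk u v)
    (hp : ∀ i, i + 2 ≤ p.length → p.getVert i ≠ p.getVert (i + 2))
    (hnd : ¬ p.support.Nodup) :
    ∃ (x : V) (c : G.Walk x x), c.IsCycle ∧ c.length ≤ p.length := by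
  induction p with
  | nil => simp at hnd
  | @cons u w v h q ih =>
    by_cases hq : q.support.Nodup
    · have hu : u ∈ q.support := by simpa [hq] using hnd
      set d := q.takeUntil u hu
      have hd : d.IsPath := ((Walk.isPath_def q).2 hq).takeUntil hu
      have hdq : d.length ≤ q.length := q.length_takeUntil_le_length hu
      refine ⟨u, .cons h d, (Walk.cons_isCycle_iff d h).2 ⟨hd, fun he => ?_⟩, by simpa⟩
      -- the cycle could only fail to close if `q` stepped straight back to `u`
      have hd1 : d.length = 1 := hd.length_eq_one_of_mem_edges (Sym2.eq_swap ▸ he)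
      have : q.getVert 1 = u := by
        rw [← Walk.getVert_takeUntil hu hd1.ge, ← hd1, Walk.getVert_length]
      exact hp 0 (by simp only [Walk.length_cons]; omega) (by simpa using this.symm)
    · have hq' : ∀ i, i + 2 ≤ q.length → q.getVert i ≠ q.getVert (i + 2) := fun i hi => by
        simpa using hp (i + 1) (by simp only [Walk.length_cons]; omega)
      obtain ⟨x, c, hc, hlen⟩ := ih hq' hq
      exact ⟨x, c, hc, by simp only [Walk.length_cons]; omega⟩

theorem egirth_le_egirth_of_injOn_neighborSet (f : H →g G)
    (hf : ∀ x, Set.InjOn f (H.neighborSet x)) : G.egirth ≤ H.egirth := by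
  classical
  refine le_egirth.2 fun a c hc => ?_
  have h3 := hc.three_le_length
  have hback : ∀ i, i + 2 ≤ (c.map f).length →
      (c.map f).getVert i ≠ (c.map f).getVert (i + 2) := by
    intro i hi hfi
    simp only [Walk.length_map, Walk.getVert_map] at hi hfi
    have hsame : c.getVert i = c.getVert (i + 2) :=
      hf (c.getVert (i + 1)) (c.adj_getVert_succ (by omega)).symm
        (c.adj_getVert_succ (by omega)) hfi
    obtain h | h := Nat.lt_or_ge (i + 2) c.length
    · have := hc.getVert_injOn' (by simp only [Set.mem_ofPred_eq]; omega)
        (by simp only [Set.mem_ofPred_eq]; omega) hsame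
      omega
    · have := hc.getVert_injOn (by simp only [Set.mem_ofPred_eq]; omega)
        (by simp only [Set.mem_ofPred_eq]; omega) hsame
      omega
  have hnd : ¬ (c.map f).support.Nodup := fun hpath => by
    have := Walk.isPath_iff_nil.1 ((Walk.isPath_def _).2 hpath)
    rw [← Walk.length_eq_zero_iff, Walk.length_map] at this
    omega
  obtain ⟨x, c', hc', hlen⟩ := (c.map f).exists_isCycle_length_le_of_not_nodup hback hnd
  exact (egirth_le_length hc').trans (by simpa using hlen)

end SimpleGraph

open SimpleGraph hiding bipartiteDoubleCover

namespace bipartiteDoubleCover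

variable {V : Type} {G : SimpleGraph V}

def fst (G : SimpleGraph V) : bipartiteDoubleCover G →g G := ⟨Prod.fst, fun h => h.1⟩

theorem injOn_fst_neighborSet (x : V × Bool) :
    Set.InjOn (fst G) ((bipartiteDoubleCover G).neighborSet x) := by
  rintro ⟨y, b⟩ ⟨-, hb⟩ ⟨z, c⟩ ⟨-, hc⟩ (rfl : y = z)
  revert hb hc
  cases x.2 <;> cases b <;> cases c <;> simp

def swap (G : SimpleGraph V) : bipartiteDoubleCover G →g bipartiteDoubleCover G :=
  ⟨Prod.map id not, fun ⟨h, hb⟩ => ⟨h, by simpa using hb⟩⟩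

theorem exists_reachable_of_reachable {x y : V} (h : G.Reachable x y) (b : Bool) :
    ∃ c, (bipartiteDoubleCover G).Reachable (x, b) (y, c) := by
  obtain ⟨p⟩ := h
  induction p generalizing b with
  | nil => exact ⟨b, .rfl⟩
  | cons h _ ih =>
    obtain ⟨c, hc⟩ := ih (!b)
    exact ⟨c, (Adj.reachable (G := bipartiteDoubleCover G) ⟨h, by simp⟩).trans hc⟩

theorem le_deleteEdges {u v : V} (b c : Bool) :
    bipartiteDoubleCover (G.deleteEdges {s(u, v)}) ≤
      (bipartiteDoubleCover G).deleteEdges {s((u, b), (v, c))} := by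
  rintro x y ⟨hxy, hb⟩
  rw [deleteEdges_adj] at hxy ⊢
  refine ⟨⟨hxy.1, hb⟩, fun he => hxy.2 ?_⟩
  have := congrArg (Sym2.map Prod.fst) (Set.mem_singleton_iff.1 he)
  simpa using this

theorem reachable_deleteEdges {u v : V} (huv : G.Adj u v)
    (h : (G.deleteEdges {s(u, v)}).Reachable u v) :
    ((bipartiteDoubleCover G).deleteEdges {s((u, false), (v, true))}).Reachable
      (u, false) (v, true) := by
  obtain ⟨c, hc⟩ := exists_reachable_of_reachable h false
  cases c
  · have hvu : ((bipartiteDoubleCover G).deleteEdges {s((u, false), (v, true))}).Adj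
        (v, false) (u, true) := by
      simp [bipartiteDoubleCover, huv.symm, huv.ne]
    exact ((hc.mono (le_deleteEdges false true)).trans hvu.reachable).trans
      ((hc.map (swap _)).mono (le_deleteEdges false true))
  · exact hc.mono (le_deleteEdges false true)

theorem isAcyclic_of_isAcyclic (h : (bipartiteDoubleCover G).IsAcyclic) : G.IsAcyclic := by
  rw [isAcyclic_iff_forall_adj_isBridge] at h ⊢
  intro u v huv hr
  exact h (show (bipartiteDoubleCover G).Adj (u, false) (v, true) from ⟨huv, by simp⟩)
    (reachable_deleteEdges huv hr)

end bipartiteDoubleCover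

theorem girth_le_girth_bipartiteDoubleCover_general {V : Type} (G : SimpleGraph V) :
    G.girth ≤ (bipartiteDoubleCover G).girth := by
  by_cases hH : (bipartiteDoubleCover G).IsAcyclic
  · simp [(bipartiteDoubleCover.isAcyclic_of_isAcyclic hH).girth_eq_zero]
  · exact ENat.toNat_le_toNat
      (egirth_le_egirth_of_injOn_neighborSet _ bipartiteDoubleCover.injOn_fst_neighborSet)
      (egirth_eq_top.not.mpr hH)

/-- The girth of the bipartite double cover of a finite simple graph `G` is at
least the girth of `G` (as extended naturals, `⊤` when the graph is acyclic). -/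
theorem girth_le_girth_bipartiteDoubleCover {V : Type} [Fintype V] [DecidableEq V]
    (G : SimpleGraph V) :
    G.girth ≤ (bipartiteDoubleCover G).girth :=
  girth_le_girth_bipartiteDoubleCover_general G
end

section
/- Every finite simple graph on n vertices in which every vertex has degree at least 3 contains a cycle of length at most 2⌊log₂ n⌋ + 2; equivalently, its girth is at most 2⌊log₂ n⌋ + 2. -/
/-!
Fix a vertex `v` and suppose the girth exceeds `2k + 2`. For `j < k`, a vertex at distance `j + 1`
from `v` has no neighbour at the same distance and at most one at distance `j`, and a vertex at
distance `j + 2` has at most one neighbour at distance `j + 1`: otherwise shortest paths from `v`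
close up into a cycle of length at most `2j + 4 ≤ 2k + 2`. With minimum degree `d`, double counting
the edges between consecutive spheres `S_i` around `v` gives `|S_{j+2}| ≥ (d - 1) |S_{j+1}|`, hence
`|S_{k+1}| ≥ d (d - 1)^k`. For `d = 3` and `k = ⌊log₂ n⌋` this is `3 · 2^k > n`.
-/

namespace SimpleGraph

open Finset

variable {V : Type*} {G : SimpleGraph V}

lemma Walk.edist_add_edist_le_length {u v a : V} (p : G.Walk u v) (ha : a ∈ p.support) :
    G.edist u a + G.edist a v ≤ p.length := by
  classical
  calc G.edist u a + G.edist a v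
      ≤ (p.takeUntil a ha).length + (p.dropUntil a ha).length :=
        add_le_add (G.edist_le _) (G.edist_le _)
    _ = p.length := by rw [← Nat.cast_add, ← Walk.length_append, Walk.take_spec]

lemma egirth_le_length_add_length_add_one [DecidableEq V] {v a b : V}
    (p : G.Walk v a) (q : G.Walk v b) (h : G.Adj a b)
    (hp : s(a, b) ∉ p.edges) (hq : s(a, b) ∉ q.edges) :
    G.egirth ≤ p.length + q.length + 1 := by
  set r := (p.reverse.append q).bypass
  have hr : s(b, a) ∉ r.edges := fun he => by
    have := (p.reverse.append q).edges_bypass_subset_edges he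
    simp only [Walk.edges_append, Walk.edges_reverse, List.mem_append, List.mem_reverse,
      Sym2.eq_swap] at this
    tauto
  have hc : (Walk.cons h.symm r).IsCycle :=
    (Walk.cons_isCycle_iff r h.symm).2 ⟨Walk.bypass_isPath _, hr⟩
  have hlen : r.length ≤ p.length + q.length := by
    simpa using (p.reverse.append q).length_bypass_le_length
  calc G.egirth ≤ (Walk.cons h.symm r).length := egirth_le_length hc
    _ ≤ p.length + q.length + 1 := by
      rw [Walk.length_cons]; push_cast; gcongr; exact_mod_cast hlen

lemma egirth_le_of_adj_of_edist_eq [DecidableEq V] {v u w : V} {k : ℕ} (h : G.Adj u w)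
    (hu : G.edist v u = k) (hw : G.edist v w = k) : G.egirth ≤ 2 * k + 1 := by
  have key : ∀ {x y : V} (p : G.Walk v x), p.length = k → G.Adj x y → G.edist v y = k →
      s(x, y) ∉ p.edges := fun p hp hxy hy he => by
    have := p.edist_add_edist_le_length (p.snd_mem_support_of_mem_edges he)
    rw [hy, hp, edist_eq_one_iff_adj.2 hxy.symm] at this
    norm_cast at this
    omega
  obtain ⟨p, hp⟩ := G.exists_walk_of_edist_eq_coe hu
  obtain ⟨q, hq⟩ := G.exists_walk_of_edist_eq_coe hw
  calc G.egirth ≤ p.length + q.length + 1 :=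
        egirth_le_length_add_length_add_one p q h (key p hp h hw)
          (Sym2.eq_swap ▸ key q hq h.symm hu)
    _ = 2 * k + 1 := by rw [hp, hq, two_mul]

lemma egirth_le_of_adj_of_adj [DecidableEq V] {v u w₁ w₂ : V} {m : ℕ} (hne : w₁ ≠ w₂)
    (h₁ : G.Adj u w₁) (h₂ : G.Adj u w₂) (hw₁ : G.edist v w₁ ≤ m) (hw₂ : G.edist v w₂ ≤ m)
    (hu : m < G.edist v u) : G.egirth ≤ 2 * m + 2 := by
  have hfar : ∀ {x : V} (p : G.Walk v x), p.length ≤ m → u ∉ p.support := fun p hp hu' =>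
    hu.not_ge <| le_self_add.trans (p.edist_add_edist_le_length hu') |>.trans
      (by exact_mod_cast hp)
  obtain ⟨p, hp⟩ :=
    G.exists_walk_of_edist_ne_top (ne_top_of_le_ne_top (ENat.natCast_ne_top m) hw₁)
  obtain ⟨q, hq⟩ :=
    G.exists_walk_of_edist_ne_top (ne_top_of_le_ne_top (ENat.natCast_ne_top m) hw₂)
  rw [← hp] at hw₁; rw [← hq] at hw₂
  norm_cast at hw₁ hw₂
  have hpu : s(u, w₂) ∉ (p.concat h₁.symm).edges := by
    rw [Walk.edges_concat, List.concat_eq_append, List.mem_append, List.mem_singleton, not_or]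
    exact ⟨fun he => hfar p hw₁ (p.fst_mem_support_of_mem_edges he),
      fun he => hne (Sym2.congr_right.1 (he.trans Sym2.eq_swap)).symm⟩
  calc G.egirth ≤ (p.concat h₁.symm).length + q.length + 1 :=
        egirth_le_length_add_length_add_one _ q h₂ hpu
          (fun he => hfar q hw₂ (q.fst_mem_support_of_mem_edges he))
    _ ≤ 2 * m + 2 := by rw [Walk.length_concat]; norm_cast; omega

variable [Fintype V]

noncomputable def sphereFinset (G : SimpleGraph V) (v : V) (k : ℕ) : Finset V :=
  {w | G.edist v w = k}

@[simp]
lemma mem_sphereFinset {v w : V} {k : ℕ} : w ∈ G.sphereFinset v k ↔ G.edist v w = k := by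
  simp [sphereFinset]

lemma sphereFinset_one [DecidableRel G.Adj] (v : V) : G.sphereFinset v 1 = G.neighborFinset v := by
  ext w; simp [edist_eq_one_iff_adj]

variable [DecidableEq V] [DecidableRel G.Adj] {v : V} {k : ℕ}

lemma card_filter_adj_sphereFinset_le_one {w : V} (hg : 2 * k + 2 < G.egirth)
    (hw : w ∈ G.sphereFinset v (k + 1)) : #{u ∈ G.sphereFinset v k | G.Adj u w} ≤ 1 := by
  refine card_le_one.2 fun u₁ hu₁ u₂ hu₂ => by_contra fun hne => hg.not_ge ?_
  simp only [mem_filter, mem_sphereFinset] at hu₁ hu₂ hw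
  exact egirth_le_of_adj_of_adj hne hu₁.2.symm hu₂.2.symm hu₁.1.le hu₂.1.le
    (by rw [hw]; exact_mod_cast k.lt_succ_self)

lemma degree_sub_one_le_card_filter_adj_sphereFinset {u : V}
    (hg : 2 * k + 3 < G.egirth) (hu : u ∈ G.sphereFinset v (k + 1)) :
    G.degree u - 1 ≤ #{w ∈ G.sphereFinset v (k + 2) | G.Adj u w} := by
  rw [mem_sphereFinset] at hu
  have hinner : ∀ w ∈ G.neighborFinset u, w ∉ G.sphereFinset v (k + 2) → G.edist v w ≤ k := by
    intro w hw hw'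
    rw [mem_neighborFinset] at hw
    rw [mem_sphereFinset] at hw'
    have hle : G.edist v w ≤ (k + 2 : ℕ) :=
      G.edist_triangle.trans (by rw [hu, edist_eq_one_iff_adj.2 hw]; norm_cast)
    have hne : G.edist v w ≠ (k + 1 : ℕ) := fun h =>
      hg.not_ge <| (egirth_le_of_adj_of_edist_eq hw hu h).trans (by norm_cast)
    lift G.edist v w to ℕ using ne_top_of_le_ne_top (ENat.natCast_ne_top _) hle with j
    norm_cast at hle hne hw' ⊢
    omega
  have hrest : #{w ∈ G.neighborFinset u | w ∉ G.sphereFinset v (k + 2)} ≤ 1 := by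
    refine card_le_one.2 fun w₁ hw₁ w₂ hw₂ => by_contra fun hne => hg.not_ge ?_
    rw [mem_filter] at hw₁ hw₂
    refine (egirth_le_of_adj_of_adj hne ((G.mem_neighborFinset _ _).1 hw₁.1)
      ((G.mem_neighborFinset _ _).1 hw₂.1) (hinner _ hw₁.1 hw₁.2) (hinner _ hw₂.1 hw₂.2)
      (by rw [hu]; exact_mod_cast k.lt_succ_self)).trans (by norm_cast; omega)
  have hsplit := card_filter_add_card_filter_not
    (s := G.neighborFinset u) (· ∈ G.sphereFinset v (k + 2))
  have hchildren : {w ∈ G.neighborFinset u | w ∈ G.sphereFinset v (k + 2)} =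
      {w ∈ G.sphereFinset v (k + 2) | G.Adj u w} := by
    ext w; simp [and_comm]
  rw [card_neighborFinset_eq_degree, hchildren] at hsplit
  omega

lemma mul_card_sphereFinset_le {d : ℕ} (hd : ∀ u, d ≤ G.degree u) (hg : 2 * k + 4 < G.egirth) :
    #(G.sphereFinset v (k + 1)) * (d - 1) ≤ #(G.sphereFinset v (k + 2)) := by
  simpa using card_mul_le_card_mul G.Adj (m := d - 1) (n := 1)
    (fun u hu => (Nat.sub_le_sub_right (hd u) 1).trans
      (degree_sub_one_le_card_filter_adj_sphereFinset
        (hg.trans_le' (by norm_cast; omega)) hu))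
    (fun w hw => card_filter_adj_sphereFinset_le_one (k := k + 1) (by exact_mod_cast hg) hw)

lemma mul_pow_le_card_sphereFinset {d : ℕ} (hd : ∀ u, d ≤ G.degree u) (v : V) :
    ∀ k : ℕ, 2 * k + 2 < G.egirth → d * (d - 1) ^ k ≤ #(G.sphereFinset v (k + 1))
  | 0, _ => by simpa [sphereFinset_one] using hd v
  | k + 1, hg => by
    calc d * (d - 1) ^ (k + 1) = d * (d - 1) ^ k * (d - 1) := by ring
      _ ≤ #(G.sphereFinset v (k + 1)) * (d - 1) := by
        gcongr
        exact mul_pow_le_card_sphereFinset hd v k (hg.trans_le' (by norm_cast; omega))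
      _ ≤ #(G.sphereFinset v (k + 2)) := mul_card_sphereFinset_le hd (by exact_mod_cast hg)

lemma mul_pow_le_card [Nonempty V] {d k : ℕ} (hd : ∀ u, d ≤ G.degree u)
    (hg : 2 * k + 2 < G.egirth) : d * (d - 1) ^ k ≤ Fintype.card V :=
  (mul_pow_le_card_sphereFinset hd (Classical.arbitrary V) k hg).trans (card_le_univ _)

end SimpleGraph

/-- Every finite (nonempty) simple graph on `n` vertices in which every vertex
has degree at least 3 contains a cycle of length at most `2⌊log₂ n⌋ + 2`,
i.e. its girth is at most `2⌊log₂ n⌋ + 2`. Here `Nat.log 2 n = ⌊log₂ n⌋`. -/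
theorem girth_le_of_min_degree_three {V : Type} [Fintype V] [DecidableEq V] [Nonempty V]
    (G : SimpleGraph V) [DecidableRel G.Adj]
    (hdeg : ∀ v : V, 3 ≤ G.degree v) :
    G.girth ≤ (2 * Nat.log 2 (Fintype.card V) + 2 : ℕ) := by
  set r := Nat.log 2 (Fintype.card V)
  suffices h : G.egirth ≤ (2 * r + 2 : ℕ) from ENat.toNat_le_of_le_natCast h
  by_contra! hg
  have hmoore : 3 * 2 ^ r ≤ Fintype.card V := G.mul_pow_le_card hdeg (by exact_mod_cast hg)
  have hlog : Fintype.card V < 2 ^ (r + 1) := Nat.lt_pow_succ_log_self one_lt_two _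
  rw [pow_succ] at hlog
  omega
end
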